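/- The modified Hamming distance is a quasimetric when defined as: for 64-bit bitvectors a,b, m_hd(a,b) = HDist(a,b) if HDist(a,b) ≤ 32, and m_hd(a,b) = 64 − HDist(a,b) + 1 otherwise, where HDist is the Hamming distance. Then m_hd(a,b) = 0 iff a = b, m_hd is symmetric, and m_hd satisfies the triangle inequality. -/

import Mathlib

/-- Hamming distance between two 64-bit bitvectors. -/
def hDist (a b : BitVec 64) : ℕ :=
  ∑ i ∈ Finset.range 64, (if a.getLsbD i ≠ b.getLsbD i then 1 else 0)

/-- Modified Hamming distance folding distances above 32. -/
def mhd (a b : BitVec 64) : ℕ :=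
  if hDist a b ≤ 32 then hDist a b else 64 - hDist a b + 1

/-!
Writing `d` for the Hamming distance and `yᶜ` for the bitwise complement, `d x yᶜ = 64 - d x y`,
so `mhd a b = min (d a b) (d a bᶜ + 1)`. In this form each term of the triangle inequality
comes from the triangle inequality of `d` through `y` or `yᶜ`, using `d xᶜ yᶜ = d x y`.
-/

section FoldedHamming

variable {ι : Type*} [Fintype ι]

theorem hammingDist_compl_compl (x y : ι → Bool) : hammingDist xᶜ yᶜ = hammingDist x y :=
  hammingDist_comp (fun _ => not) fun _ => Bool.not_injective

theorem hammingDist_compl_add_hammingDist (x y : ι → Bool) :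
    hammingDist x yᶜ + hammingDist x y = Fintype.card ι := by
  classical
  simp only [hammingDist, Pi.compl_apply, Bool.compl_eq_bnot, Bool.ne_not]
  exact Finset.card_filter_add_card_filter_not _

theorem hammingDist_compl_comm (x y : ι → Bool) : hammingDist x yᶜ = hammingDist y xᶜ := by
  rw [← hammingDist_compl_compl, compl_compl, hammingDist_comm]

def foldedHammingDist (x y : ι → Bool) : ℕ :=
  min (hammingDist x y) (hammingDist x yᶜ + 1)

theorem foldedHammingDist_eq_zero {x y : ι → Bool} : foldedHammingDist x y = 0 ↔ x = y := by
  simp [foldedHammingDist, hammingDist_eq_zero]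

theorem foldedHammingDist_comm (x y : ι → Bool) :
    foldedHammingDist x y = foldedHammingDist y x := by
  rw [foldedHammingDist, foldedHammingDist, hammingDist_comm, hammingDist_compl_comm]

theorem foldedHammingDist_triangle (x y z : ι → Bool) :
    foldedHammingDist x z ≤ foldedHammingDist x y + foldedHammingDist y z := by
  have hx : foldedHammingDist x z ≤ hammingDist x z := min_le_left ..
  have hxc : foldedHammingDist x z ≤ hammingDist x zᶜ + 1 := min_le_right ..
  obtain hxy | hxy : foldedHammingDist x y = hammingDist x y ∨
      foldedHammingDist x y = hammingDist x yᶜ + 1 := min_choice ..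
  all_goals obtain hyz | hyz : foldedHammingDist y z = hammingDist y z ∨
      foldedHammingDist y z = hammingDist y zᶜ + 1 := min_choice ..
  all_goals rw [hxy, hyz]
  · exact hx.trans (hammingDist_triangle x y z)
  · linarith [hammingDist_triangle x y zᶜ]
  · linarith [hammingDist_triangle x yᶜ zᶜ, hammingDist_compl_compl y z]
  · linarith [hammingDist_triangle x yᶜ z, hammingDist_compl_comm z y, hammingDist_comm z yᶜ]

end FoldedHamming

def bitFun {w : ℕ} (a : BitVec w) : Fin w → Bool := fun i => a.getLsbD i

theorem bitFun_injective {w : ℕ} : Function.Injective (bitFun (w := w)) :=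
  fun _ _ h => BitVec.eq_of_getLsbD_eq fun i hi => congrFun h ⟨i, hi⟩

theorem hDist_eq_hammingDist (a b : BitVec 64) :
    hDist a b = hammingDist (bitFun a) (bitFun b) := by
  rw [hDist, hammingDist, Finset.card_filter]
  exact (Fin.sum_univ_eq_sum_range (fun i => if a.getLsbD i ≠ b.getLsbD i then 1 else 0) 64).symm

theorem mhd_eq_foldedHammingDist (a b : BitVec 64) :
    mhd a b = foldedHammingDist (bitFun a) (bitFun b) := by
  have hcompl := hammingDist_compl_add_hammingDist (bitFun a) (bitFun b)
  rw [Fintype.card_fin] at hcompl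
  rw [mhd, hDist_eq_hammingDist, foldedHammingDist]
  split_ifs <;> omega

theorem stmt_14 :
    (∀ a b : BitVec 64, mhd a b = 0 ↔ a = b) ∧
    (∀ a b : BitVec 64, mhd a b = mhd b a) ∧
    (∀ a b c : BitVec 64, mhd a c ≤ mhd a b + mhd b c) := by
  simp only [mhd_eq_foldedHammingDist]
  exact ⟨fun _ _ => foldedHammingDist_eq_zero.trans bitFun_injective.eq_iff,
    fun _ _ => foldedHammingDist_comm _ _, fun _ _ _ => foldedHammingDist_triangle _ _ _⟩
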